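/- arXiv:1509.08235 — 4 statements merged into one kernel-verified Lean document; each statement's English description precedes it below -/
import Mathlib

section
/- Let c be a real number and let f be a measurable function from (0,∞) to ℂ such that u ↦ f(u)u^{c-1} is Lebesgue integrable on (0,∞), and suppose that the function t ↦ M[f](c+it) := ∫₀^∞ u^{c+it-1} f(u) du is Lebesgue integrable over ℝ. Then for almost every x ∈ (0,∞) one has f(x) = (x^{-c}/(2π)) ∫_{-∞}^{∞} M[f](c+it) x^{-it} dt. -/
open MeasureTheory Filter Complex Set

noncomputable section

/-- Membership in the space `X²_c`: `u ↦ f(u) u^(c-1/2)` belongs to `L²(0,∞)`. -/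
def MemXc2 (c : ℝ) (f : ℝ → ℂ) : Prop :=
  MemLp (fun u : ℝ => f u * ((u ^ (c - 1/2) : ℝ) : ℂ)) 2 (volume.restrict (Set.Ioi 0))

/-- The `X²_c` norm: `(∫₀^∞ |f(u)|² u^(2c-1) du)^(1/2)`. -/
def Xnorm (c : ℝ) (f : ℝ → ℂ) : ℝ :=
  Real.sqrt (∫ u in Set.Ioi (0:ℝ), ‖f u‖ ^ 2 * u ^ (2 * c - 1))

/-- The ordinary Mellin transform of `f` at the point `c + i t`. -/
def MellinT (c : ℝ) (f : ℝ → ℂ) (t : ℝ) : ℂ :=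
  ∫ u in Set.Ioi (0:ℝ), (u : ℂ) ^ ((c : ℂ) + t * Complex.I - 1) * f u

/-- `G` is the `L²`-Mellin transform of `f` on the line `c + iℝ`: the truncated Mellin
integrals over `(1/ρ, ρ]` converge to `G` in the `L²(ℝ, dt)` norm as `ρ → ∞`. -/
def MellinTransL2 (c : ℝ) (f G : ℝ → ℂ) : Prop :=
  Tendsto (fun ρ : ℝ =>
      eLpNorm (fun t : ℝ =>
        (∫ u in Set.Ioc ρ⁻¹ ρ, (u : ℂ) ^ ((c : ℂ) + t * Complex.I - 1) * f u) - G t)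
        2 volume)
    atTop (nhds 0)

/-- The Mellin derivative `Θ_c f (x) = x f'(x) + c f(x)`. -/
def mellinD (c : ℝ) (f : ℝ → ℂ) : ℝ → ℂ :=
  fun x => (x : ℂ) * deriv f x + (c : ℂ) * f x

/-- Membership in the Mellin–Bernstein (bandlimited) space `B²_{c,T}`: `f` is continuous
on `(0,∞)`, belongs to `X²_c`, and its `L²`-Mellin transform vanishes a.e. outside `[-T,T]`. -/
def MemB2 (c T : ℝ) (f : ℝ → ℂ) : Prop :=
  ContinuousOn f (Set.Ioi 0) ∧ MemXc2 c f ∧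
    ∃ G : ℝ → ℂ, Measurable G ∧ MellinTransL2 c f G ∧ ∀ᵐ t : ℝ, T < |t| → G t = 0

/-- The `lin_c` function: `lin_c(x) = x^(-c) sin(π log x)/(π log x)`, `lin_c(1) = 1`. -/
def linc (c : ℝ) (x : ℝ) : ℝ :=
  if x = 1 then 1 else x ^ (-c) * Real.sin (Real.pi * Real.log x) / (Real.pi * Real.log x)


/-!
Substituting `u = e^{-y}` turns the Mellin transform on the line `Re s = c` into the Fourier
transform of `g(y) = e^{-cy} f(e^{-y})`, and `f ∈ X_c` says exactly that `g` is integrable.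
Fourier inversion `g = 𝓕⁻ (𝓕 g)` holds almost everywhere as soon as `g` and `𝓕 g` are integrable:
pairing with a smooth compactly supported `φ`, which is a Schwartz function, one moves `𝓕` and
`𝓕⁻` onto `φ` and uses inversion for `φ`. Since `y ↦ e^{-y}` maps null sets to null sets, the
a.e. identity on `ℝ` transfers back to `(0, ∞)`.
-/

open scoped FourierTransform

section Fourier

variable {V E : Type*} [NormedAddCommGroup V] [InnerProductSpace ℝ V] [MeasurableSpace V]
  [BorelSpace V] [FiniteDimensional ℝ V] [NormedAddCommGroup E] [NormedSpace ℂ E]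

theorem Real.continuous_fourierInv_of_integrable {f : V → E} (hf : Integrable f) :
    Continuous (𝓕⁻ f) :=
  VectorFourier.fourierIntegral_continuous continuous_fourierChar continuous_inner.neg hf

variable [CompleteSpace E]

theorem Real.integral_fourier_smul_eq_of_integrable {φ : V → ℂ} {f : V → E}
    (hφ : Integrable φ) (hf : Integrable f) :
    ∫ ξ, 𝓕 φ ξ • f ξ = ∫ x, φ x • 𝓕 f x := by
  have := VectorFourier.integral_fourierIntegral_smul_eq_flip (L := innerₗ V)
    continuous_fourierChar continuous_inner hφ hf
  rwa [flip_innerₗ] at this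

theorem Real.integral_fourierInv_smul_eq_of_integrable {φ : V → ℂ} {f : V → E}
    (hφ : Integrable φ) (hf : Integrable f) :
    ∫ ξ, 𝓕⁻ φ ξ • f ξ = ∫ x, φ x • 𝓕⁻ f x := by
  have := VectorFourier.integral_fourierIntegral_smul_eq_flip (L := -innerₗ V)
    continuous_fourierChar continuous_inner.neg hφ hf
  rwa [show (-innerₗ V).flip = -innerₗ V by ext; simp [real_inner_comm]] at this

theorem MeasureTheory.Integrable.ae_eq_fourierInv_fourier {f : V → E} (hf : Integrable f)
    (h'f : Integrable (𝓕 f)) : f =ᵐ[volume] 𝓕⁻ (𝓕 f) := by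
  refine ae_eq_of_integral_contDiff_smul_eq hf.locallyIntegrable
    (Real.continuous_fourierInv_of_integrable h'f).locallyIntegrable fun φ hφ hφ_supp => ?_
  let Φ : SchwartzMap V ℂ := (hφ_supp.comp_left Complex.ofReal_zero).toSchwartzMap
    (Complex.ofRealCLM.contDiff.comp hφ)
  have hΦ : ∀ x, (φ x : ℂ) = Φ x := fun _ => rfl
  have hΦ_inv : 𝓕 (𝓕⁻ (Φ : V → ℂ)) = Φ := by
    rw [← SchwartzMap.fourierInv_coe, ← SchwartzMap.fourier_coe,
      FourierTransform.fourier_fourierInv_eq]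
  calc ∫ x, φ x • f x = ∫ x, 𝓕 (𝓕⁻ (Φ : V → ℂ)) x • f x := by
        simp_rw [hΦ_inv, ← Complex.coe_smul, hΦ]
    _ = ∫ ξ, 𝓕⁻ (Φ : V → ℂ) ξ • 𝓕 f ξ :=
        Real.integral_fourier_smul_eq_of_integrable
          (SchwartzMap.fourierInv_coe Φ ▸ (𝓕⁻ Φ).integrable) hf
    _ = ∫ x, Φ x • 𝓕⁻ (𝓕 f) x :=
        Real.integral_fourierInv_smul_eq_of_integrable Φ.integrable h'f
    _ = ∫ x, φ x • 𝓕⁻ (𝓕 f) x := by simp_rw [← Complex.coe_smul, hΦ]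

end Fourier

theorem Real.quasiMeasurePreserving_neg_log :
    Measure.QuasiMeasurePreserving (fun x => -Real.log x) (volume.restrict (Ioi 0)) volume := by
  have hmeas : Measurable fun x => -Real.log x := Real.measurable_log.neg
  refine ⟨hmeas, Measure.AbsolutelyContinuous.mk fun s hs hs0 => ?_⟩
  rw [Measure.map_apply hmeas hs, Measure.restrict_apply' measurableSet_Ioi]
  refine measure_mono_null ?_ (addHaar_image_eq_zero_of_differentiableOn_of_addHaar_eq_zero volume
    (Real.differentiable_exp.comp differentiable_neg).differentiableOn hs0)
  rintro x ⟨hx, hx0 : 0 < x⟩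
  exact ⟨-Real.log x, hx, by simp [Real.exp_log hx0]⟩

section Mellin

variable {E : Type*} [NormedAddCommGroup E] [NormedSpace ℂ E]

theorem MellinConvergent.integrable_exp_neg {f : ℝ → E} {σ : ℝ} (hf : MellinConvergent f σ) :
    Integrable (fun u : ℝ => Real.exp (-σ * u) • f (Real.exp (-u))) := by
  have h := (integrableOn_image_iff_integrableOn_abs_deriv_smul MeasurableSet.univ
    (fun x _ => (Real.hasDerivAt_exp x).hasDerivWithinAt) Real.exp_injective.injOn _).mp
    (by rwa [image_univ, Real.range_exp])
  refine (integrableOn_univ.mp h).comp_neg.congr (ae_of_all _ fun u => ?_)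
  have hpow : ((Real.exp (-u) : ℂ)) ^ ((σ : ℂ) - 1) = ((Real.exp (-u * (σ - 1)) : ℝ) : ℂ) := by
    rw [Real.exp_mul, Complex.ofReal_cpow (Real.exp_pos _).le, Complex.ofReal_sub,
      Complex.ofReal_one]
  simp only [abs_of_pos (Real.exp_pos _), hpow, Complex.coe_smul, smul_smul, ← Real.exp_add]
  ring_nf

theorem mellin_ofReal_add_two_pi_mul_I (f : ℝ → E) (σ ξ : ℝ) :
    mellin f (σ + 2 * Real.pi * ξ * I) =
      𝓕 (fun u : ℝ => Real.exp (-σ * u) • f (Real.exp (-u))) ξ := by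
  rw [mellin_eq_fourier]
  simp [field]

theorem mellinInv_mellin_ae_eq [CompleteSpace E] (σ : ℝ) {f : ℝ → E} (hf : MellinConvergent f σ)
    (hFf : VerticalIntegrable (mellin f) σ) :
    ∀ᵐ x ∂(volume.restrict (Ioi 0)), mellinInv σ (mellin f) x = f x := by
  set g := fun u : ℝ => Real.exp (-σ * u) • f (Real.exp (-u))
  have hFg_eq : (fun ξ : ℝ => mellin f (σ + 2 * Real.pi * ξ * I)) = 𝓕 g :=
    funext (mellin_ofReal_add_two_pi_mul_I f σ)
  have hFg : Integrable (𝓕 g) := by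
    rw [← hFg_eq]
    simpa [mul_assoc] using hFf.comp_mul_left' (by positivity : 2 * Real.pi ≠ 0)
  filter_upwards [Real.quasiMeasurePreserving_neg_log.ae
      (hf.integrable_exp_neg.ae_eq_fourierInv_fourier hFg),
    ae_restrict_mem measurableSet_Ioi]
    with x (hgx : g (-Real.log x) = 𝓕⁻ (𝓕 g) (-Real.log x)) (hx : 0 < x)
  have hg_log : g (-Real.log x) = (x ^ σ : ℝ) • f x := by
    simp [g, Real.exp_log hx, Real.rpow_def_of_pos hx, mul_comm]
  rw [mellinInv_eq_fourierInv _ _ hx, hFg_eq, ← hgx, hg_log, ← Complex.coe_smul, smul_smul,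
    Complex.ofReal_cpow hx.le, ← Complex.cpow_add _ _ (Complex.ofReal_ne_zero.mpr hx.ne'),
    neg_add_cancel, Complex.cpow_zero, one_smul]

end Mellin

theorem MellinT_eq_mellin (c : ℝ) (f : ℝ → ℂ) (t : ℝ) :
    MellinT c f t = mellin f (c + t * I) :=
  setIntegral_congr_fun measurableSet_Ioi fun _ _ => (smul_eq_mul _ _).symm

theorem mellinConvergent_of_integrableOn_mul_rpow {c : ℝ} {f : ℝ → ℂ}
    (hf : IntegrableOn (fun u : ℝ => f u * ((u ^ (c - 1) : ℝ) : ℂ)) (Ioi 0)) :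
    MellinConvergent f c :=
  hf.congr_fun (fun u (hu : 0 < u) => by
    simp [Complex.ofReal_cpow hu.le, mul_comm]) measurableSet_Ioi

theorem mellinInv_eq_rpow_mul_integral (σ : ℝ) (F : ℂ → ℂ) {x : ℝ} (hx : 0 < x) :
    mellinInv σ F x = ((x ^ (-σ) : ℝ) : ℂ) / (2 * Real.pi) *
      ∫ t : ℝ, F (σ + t * I) * (x : ℂ) ^ (-(t : ℂ) * I) := by
  have hx0 : (x : ℂ) ≠ 0 := Complex.ofReal_ne_zero.mpr hx.ne'
  have hsplit : ∀ t : ℝ, (x : ℂ) ^ (-((σ : ℂ) + t * I)) • F (σ + t * I)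
      = (x : ℂ) ^ (-(σ : ℂ)) * (F (σ + t * I) * (x : ℂ) ^ (-(t : ℂ) * I)) := fun t => by
    rw [smul_eq_mul, neg_add, ← neg_mul, Complex.cpow_add _ _ hx0]
    ring
  rw [mellinInv, funext hsplit, integral_const_mul, Complex.ofReal_cpow hx.le]
  simp only [Complex.real_smul]
  push_cast
  ring

theorem mellin_inversion_Xc_general (c : ℝ) (f : ℝ → ℂ)
    (hf1 : IntegrableOn (fun u : ℝ => f u * ((u ^ (c - 1) : ℝ) : ℂ)) (Set.Ioi 0))
    (hM : Integrable (fun t : ℝ => MellinT c f t)) :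
    ∀ᵐ x ∂(volume.restrict (Set.Ioi (0:ℝ))),
      f x = ((x ^ (-c) : ℝ) : ℂ) / (2 * Real.pi) *
        ∫ t : ℝ, MellinT c f t * (x : ℂ) ^ (-(t : ℂ) * Complex.I) := by
  have hVert : VerticalIntegrable (mellin f) c := by
    simpa only [VerticalIntegrable, MellinT_eq_mellin] using hM
  filter_upwards [mellinInv_mellin_ae_eq c (mellinConvergent_of_integrableOn_mul_rpow hf1) hVert,
    ae_restrict_mem measurableSet_Ioi] with x hinv (hx : 0 < x)
  rw [← hinv, mellinInv_eq_rpow_mul_integral c _ hx]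
  simp only [MellinT_eq_mellin]

/-- **Mellin inversion theorem in `X_c`.** If `f ∈ X_c` and `t ↦ M[f](c+it)` is
integrable over `ℝ`, then for a.e. `x > 0`,
`f(x) = (x^(-c)/(2π)) ∫_ℝ M[f](c+it) x^(-it) dt`. -/
theorem mellin_inversion_Xc (c : ℝ) (f : ℝ → ℂ) (hmeas : Measurable f)
    (hf1 : IntegrableOn (fun u : ℝ => f u * ((u ^ (c - 1) : ℝ) : ℂ)) (Set.Ioi 0))
    (hM : Integrable (fun t : ℝ => MellinT c f t)) :
    ∀ᵐ x ∂(volume.restrict (Set.Ioi (0:ℝ))),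
      f x = ((x ^ (-c) : ℝ) : ℂ) / (2 * Real.pi) *
        ∫ t : ℝ, MellinT c f t * (x : ℂ) ^ (-(t : ℂ) * Complex.I) :=
  mellin_inversion_Xc_general c f hf1 hM
end
end

section
/- Let c be a real number and let f : (0,∞) → ℂ be measurable with u ↦ f(u)u^{c-1} Lebesgue integrable on (0,∞). If the function t ↦ M[f](c+it) := ∫₀^∞ u^{c+it-1} f(u) du is Lebesgue integrable over ℝ, then u ↦ f(u)u^{c-1/2} belongs to L²(0,∞). -/
open MeasureTheory Filter Complex Set

noncomputable section

/-! In the coordinates `u = e^{-x}` the function `g(x) = e^{-cx} f(e^{-x})` is integrable on `ℝ`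
(this is `f ∈ X_c`), and its Fourier transform is `t ↦ M[f](c + 2πit)`, hence integrable.
An integrable function with integrable Fourier transform is essentially bounded by `‖𝓕 g‖₁`:
mollify with bump functions, apply Fourier inversion to the continuous mollified functions, and
pass to the a.e. limit. So `g ∈ L¹ ∩ L^∞ ⊆ L²`, and undoing the substitution gives
`∫₀^∞ |f(u)|² u^{2c-1} du = ∫ |g|² < ∞`. -/

theorem MeasureTheory.Integrable.memLp_two_of_ae_norm_le {α E : Type*} [MeasurableSpace α]
    {μ : Measure α} [NormedAddCommGroup E] {g : α → E} (hg : Integrable g μ) {C : ℝ}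
    (hC : ∀ᵐ x ∂μ, ‖g x‖ ≤ C) : MemLp g 2 μ := by
  rw [memLp_two_iff_integrable_sq_norm hg.aestronglyMeasurable]
  refine (hg.norm.const_mul C).mono' (hg.aestronglyMeasurable.norm.pow 2) ?_
  filter_upwards [hC] with x hx
  rw [Real.norm_of_nonneg (by positivity), sq]
  exact mul_le_mul_of_nonneg_right hx (norm_nonneg _)

open scoped FourierTransform

section FourierBound

open scoped Convolution
open ContinuousLinearMap

variable {V E : Type*} [NormedAddCommGroup V] [InnerProductSpace ℝ V] [FiniteDimensional ℝ V]
  [MeasurableSpace V] [BorelSpace V] [NormedAddCommGroup E] [NormedSpace ℂ E] [CompleteSpace E]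

theorem Real.fourier_lsmul_convolution_eq {ψ : V → ℝ} {g : V → E} (hψ : Integrable ψ)
    (hg : Integrable g) (ξ : V) :
    𝓕 (ψ ⋆[lsmul ℝ ℝ] g) ξ = 𝓕 (fun x ↦ (ψ x : ℂ)) ξ • 𝓕 g ξ := by
  have hconv : ψ ⋆[lsmul ℝ ℝ] g = (fun x ↦ (ψ x : ℂ)) ⋆[lsmul ℂ ℂ] g := by
    ext x
    simp only [convolution_lsmul, Complex.coe_smul]
  rw [hconv]
  exact Real.fourier_smul_convolution_eq hψ.ofReal hg ξ

theorem MeasureTheory.Integrable.norm_le_integral_norm_fourier {h : V → E} (hh : Integrable h)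
    (hFh : Integrable (𝓕 h)) {x : V} (hx : ContinuousAt h x) : ‖h x‖ ≤ ∫ ξ, ‖𝓕 h ξ‖ := by
  rw [← hh.fourierInv_fourier_eq hFh hx]
  exact VectorFourier.norm_fourierIntegral_le_integral_norm _ _ _ _ _

theorem ContDiffBump.norm_fourier_normed_le_one {r : ContDiffBump (0 : V)} (ξ : V) :
    ‖𝓕 (fun x ↦ (r.normed volume x : ℂ)) ξ‖ ≤ 1 := by
  calc ‖𝓕 (fun x ↦ (r.normed volume x : ℂ)) ξ‖ ≤ ∫ x, ‖(r.normed volume x : ℂ)‖ :=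
        VectorFourier.norm_fourierIntegral_le_integral_norm _ _ _ _ _
    _ = ∫ x, r.normed volume x := by
        simp only [Complex.norm_real, Real.norm_of_nonneg (r.nonneg_normed _)]
    _ = 1 := r.integral_normed

theorem ContDiffBump.norm_normed_convolution_le_integral_norm_fourier (r : ContDiffBump (0 : V))
    {g : V → E} (hg : Integrable g) (hFg : Integrable (𝓕 g)) (x : V) :
    ‖(r.normed volume ⋆[lsmul ℝ ℝ] g) x‖ ≤ ∫ ξ, ‖𝓕 g ξ‖ := by
  have hrg : Integrable (r.normed volume ⋆[lsmul ℝ ℝ] g) :=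
    r.integrable_normed.integrable_convolution _ hg
  have hF_le (ξ : V) : ‖𝓕 (r.normed volume ⋆[lsmul ℝ ℝ] g) ξ‖ ≤ ‖𝓕 g ξ‖ := by
    rw [Real.fourier_lsmul_convolution_eq r.integrable_normed hg, norm_smul]
    exact mul_le_of_le_one_left (norm_nonneg _) (r.norm_fourier_normed_le_one ξ)
  have hF_int : Integrable (𝓕 (r.normed volume ⋆[lsmul ℝ ℝ] g)) :=
    hFg.norm.mono' (VectorFourier.fourierIntegral_continuous Real.continuous_fourierChar
      continuous_inner hrg).aestronglyMeasurable (Eventually.of_forall hF_le)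
  have hcont : Continuous (r.normed volume ⋆[lsmul ℝ ℝ] g) :=
    r.hasCompactSupport_normed.continuous_convolution_left _ r.continuous_normed
      hg.locallyIntegrable
  calc ‖(r.normed volume ⋆[lsmul ℝ ℝ] g) x‖
      ≤ ∫ ξ, ‖𝓕 (r.normed volume ⋆[lsmul ℝ ℝ] g) ξ‖ :=
        hrg.norm_le_integral_norm_fourier hF_int hcont.continuousAt
    _ ≤ ∫ ξ, ‖𝓕 g ξ‖ := integral_mono hF_int.norm hFg.norm hF_le

theorem MeasureTheory.Integrable.ae_norm_le_integral_norm_fourier {g : V → E}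
    (hg : Integrable g) (hFg : Integrable (𝓕 g)) : ∀ᵐ x, ‖g x‖ ≤ ∫ ξ, ‖𝓕 g ξ‖ := by
  let r (n : ℕ) : ContDiffBump (0 : V) :=
    ⟨((n : ℝ) + 1)⁻¹, 2 * ((n : ℝ) + 1)⁻¹, by positivity, by
      linarith [show (0 : ℝ) < ((n : ℝ) + 1)⁻¹ by positivity]⟩
  have hr : Tendsto (fun n ↦ (r n).rOut) atTop (nhds 0) := by
    simpa using (tendsto_one_div_add_atTop_nhds_zero_nat (𝕜 := ℝ)).const_mul 2
  filter_upwards [ContDiffBump.ae_convolution_tendsto_right_of_locallyIntegrable hr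
    (K := 2) (Eventually.of_forall fun n ↦ le_rfl) hg.locallyIntegrable] with x hx
  exact le_of_tendsto hx.norm (Eventually.of_forall fun n ↦
    (r n).norm_normed_convolution_le_integral_norm_fourier hg hFg x)

end FourierBound

open Real

theorem integrableOn_Ioi_zero_iff_integrable_exp_neg_smul {E : Type*} [NormedAddCommGroup E]
    [NormedSpace ℝ E] {F : ℝ → E} :
    IntegrableOn F (Ioi 0) ↔ Integrable (fun x ↦ rexp (-x) • F (rexp (-x))) := by
  have himage : (fun x ↦ rexp (-x)) '' univ = Ioi 0 := by
    rw [image_univ, ← Real.range_exp]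
    exact neg_surjective.range_comp rexp
  have hderiv (x : ℝ) (_ : x ∈ univ) : HasDerivWithinAt (fun x ↦ rexp (-x)) (-rexp (-x)) univ x :=
    by simpa using (hasDerivAt_neg x).exp
  rw [← himage, integrableOn_image_iff_integrableOn_abs_deriv_smul MeasurableSet.univ hderiv
    (Real.exp_injective.comp neg_injective).injOn, integrableOn_univ]
  simp only [abs_neg, Real.abs_exp]

theorem mellinT_eq_fourier (c : ℝ) (f : ℝ → ℂ) (t : ℝ) :
    MellinT c f t = 𝓕 (fun x ↦ rexp (-c * x) • f (rexp (-x))) (t / (2 * π)) := by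
  have := mellin_eq_fourier f (s := c + t * I)
  simp only [add_re, ofReal_re, mul_re, I_re, mul_zero, ofReal_im, I_im, mul_one, sub_self,
    add_zero, add_im, mul_im, zero_add] at this
  rw [← this]
  simp only [MellinT, mellin, smul_eq_mul]

theorem integrable_fourier_of_integrable_mellinT {c : ℝ} {f : ℝ → ℂ}
    (hM : Integrable (MellinT c f)) :
    Integrable (𝓕 (fun x ↦ rexp (-c * x) • f (rexp (-x)))) := by
  have h2π : 2 * π ≠ 0 := by positivity
  refine (hM.comp_mul_left' h2π).congr (Eventually.of_forall fun ξ ↦ ?_)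
  simp only [mellinT_eq_fourier, mul_div_cancel_left₀ _ h2π]

/-- If `f ∈ X_c` and `t ↦ M[f](c+it)` is integrable over `ℝ`, then `f ∈ X²_c`. -/
theorem mellin_Xc_mem_Xc2 (c : ℝ) (f : ℝ → ℂ) (hmeas : Measurable f)
    (hf1 : IntegrableOn (fun u : ℝ => f u * ((u ^ (c - 1) : ℝ) : ℂ)) (Set.Ioi 0))
    (hM : Integrable (fun t : ℝ => MellinT c f t)) :
    MemXc2 c f := by
  set g : ℝ → ℂ := fun x ↦ rexp (-c * x) • f (rexp (-x))
  have hg : Integrable g := by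
    refine (integrableOn_Ioi_zero_iff_integrable_exp_neg_smul.1 hf1).congr
      (Eventually.of_forall fun x ↦ ?_)
    have hexp : rexp (-x) * rexp (-x) ^ (c - 1) = rexp (-c * x) := by
      rw [← Real.exp_mul, ← Real.exp_add]; ring_nf
    simp only [g, real_smul, ← hexp, ofReal_mul]
    ring
  have hg2 : MemLp g 2 :=
    hg.memLp_two_of_ae_norm_le (hg.ae_norm_le_integral_norm_fourier
      (integrable_fourier_of_integrable_mellinT hM))
  rw [MemXc2, memLp_two_iff_integrable_sq_norm (by fun_prop : Measurable _).aestronglyMeasurable]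
  refine integrableOn_Ioi_zero_iff_integrable_exp_neg_smul.2
    (((memLp_two_iff_integrable_sq_norm hg.aestronglyMeasurable).1 hg2).congr
      (Eventually.of_forall fun x ↦ ?_))
  have hexp : rexp (-x) * (rexp (-x) ^ (c - 1 / 2)) ^ 2 = rexp (-c * x) ^ 2 := by
    rw [← Real.exp_mul, ← Real.exp_nat_mul, ← Real.exp_nat_mul, ← Real.exp_add]; ring_nf
  simp only [g, norm_smul, norm_mul, norm_real, Real.norm_eq_abs, Real.abs_exp,
    abs_of_nonneg (Real.rpow_nonneg (Real.exp_pos _).le _), smul_eq_mul, mul_pow, ← hexp]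
  ring
end
end

section
/- Let c ∈ ℝ, r ∈ ℕ, and let f belong to the Mellin–Sobolev space W^{2,r}_c. Define h : ℝ → ℂ by h(x) = e^{cx} f(e^x). Then h is r-times differentiable almost everywhere, h^{(r)} ∈ L²(ℝ), and ‖h^{(r)}‖_{L²(ℝ)} = ‖Θ_c^r f‖_{X²_c}. -/
open MeasureTheory Filter Complex Set

noncomputable section

/-! The substitution `u = eˣ` turns `g ↦ e^{cx} g(eˣ)` into an isometry `X²_c → L²(ℝ)`
(the weight `u^{2c-1} du` becomes `e^{2cx} dx`), and it intertwines `Θ_c` with `d/dx`: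
`(e^{cx} g(eˣ))' = e^{cx} (Θ_c g)(eˣ)`. Hence `h^{(j)} = e^{cx} (Θ_c^j f)(eˣ)` for `j < r`
everywhere, and for `j = r` at every `x` where `Θ_c^{r-1} f` is differentiable at `eˣ`. That
happens for a.e. `x`: `f^{(r-1)}` is a primitive of a locally integrable function, hence
differentiable a.e. by Lebesgue's differentiation theorem, and the commutation rule
`D^m Θ_c = Θ_{c+m} D^m` transfers this to `Θ_c^{r-1} f`. -/

theorem ContDiffOn.differentiableAt_iteratedDeriv {𝕜 F : Type*} [NontriviallyNormedField 𝕜]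
    [NormedAddCommGroup F] [NormedSpace 𝕜 F] {f : 𝕜 → F} {s : Set 𝕜}
    {n i : ℕ} {x : 𝕜} (hf : ContDiffOn 𝕜 n f s) (hs : IsOpen s) (hi : i < n)
    (hx : x ∈ s) :
    DifferentiableAt 𝕜 (iteratedDeriv i f) x :=
  ((hf.differentiableOn_iteratedDerivWithin (by exact_mod_cast hi) hs.uniqueDiffOn).congr
    (iteratedDerivWithin_of_isOpen hs).symm x hx).differentiableAt (hs.mem_nhds hx)

theorem LocallyIntegrableOn.ae_hasDerivAt_of_eq_add_integral {E : Type*} [NormedAddCommGroup E]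
    [NormedSpace ℝ E] [CompleteSpace E] {m F : ℝ → E} {a b : ℝ} {C : E}
    (hm : LocallyIntegrableOn m (Ioi b)) (ha : b < a)
    (hF : ∀ x ∈ Ioi b, F x = C + ∫ t in a..x, m t) :
    ∀ᵐ x ∂(volume.restrict (Ioi b)), HasDerivAt F (m x) x := by
  set lo : ℕ → ℝ := fun k => min a (b + ((k : ℝ) + 1)⁻¹)
  set hi : ℕ → ℝ := fun k => max a (b + k + 1)
  have hlo : ∀ k, b < lo k := fun k => lt_min ha (by simp only [lt_add_iff_pos_right]; positivity)
  have hsub : ∀ k, uIcc (lo k) (hi k) ⊆ Ioi b := fun k t ht =>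
    (lt_min (hlo k) ((hlo k).trans_le ((min_le_left _ _).trans (le_max_left _ _)))).trans_le ht.1
  have hint : ∀ k, IntervalIntegrable m volume (lo k) (hi k) := fun k =>
    (hm.integrableOn_compact_subset (hsub k) isCompact_uIcc).intervalIntegrable
  rw [ae_restrict_iff' measurableSet_Ioi]
  filter_upwards [ae_all_iff.mpr fun k => (hint k).ae_hasDerivAt_integral] with x hx hxb
  -- one interval `[lo k, hi k]` of the exhaustion contains both `a` and `x`
  set k := ⌈(x - b)⁻¹ + (x - b)⌉₊
  have hxb' : 0 < x - b := sub_pos.mpr hxb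
  have hk : (x - b)⁻¹ + (x - b) ≤ k := Nat.le_ceil _
  have ha_mem : a ∈ uIcc (lo k) (hi k) :=
    ⟨inf_le_left.trans (min_le_left _ _), le_sup_of_le_right (le_max_left _ _)⟩
  have hx_mem : x ∈ uIcc (lo k) (hi k) := by
    refine ⟨inf_le_left.trans ((min_le_right _ _).trans ?_), le_sup_of_le_right ?_⟩
    · have : ((k : ℝ) + 1)⁻¹ ≤ x - b := by
        rw [inv_le_comm₀ (by positivity) hxb']
        nlinarith [inv_pos.mpr hxb']
      linarith
    · exact le_max_of_le_right (by nlinarith [inv_pos.mpr hxb'])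
  exact ((hx k hx_mem a ha_mem).const_add C).congr_of_eventuallyEq
    (eventuallyEq_of_mem (Ioi_mem_nhds hxb) hF)

theorem quasiMeasurePreserving_exp :
    Measure.QuasiMeasurePreserving Real.exp volume (volume.restrict (Ioi 0)) := by
  refine ⟨Real.measurable_exp, Measure.AbsolutelyContinuous.mk fun s hs hs0 => ?_⟩
  rw [Measure.restrict_apply hs] at hs0
  rw [Measure.map_apply Real.measurable_exp hs]
  have hlog : volume (Real.log '' (s ∩ Ioi 0)) = 0 :=
    addHaar_image_eq_zero_of_differentiableOn_of_addHaar_eq_zero volume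
      (fun u hu => (Real.differentiableAt_log hu.2.ne').differentiableWithinAt) hs0
  refine measure_mono_null (fun x hx => ?_) hlog
  exact ⟨Real.exp x, ⟨hx, Real.exp_pos x⟩, Real.log_exp x⟩

theorem integral_Ioi_zero_eq_integral_exp_smul {E : Type*} [NormedAddCommGroup E]
    [NormedSpace ℝ E] (g : ℝ → E) :
    ∫ u in Ioi 0, g u = ∫ x, Real.exp x • g (Real.exp x) := by
  have h := integral_image_eq_integral_abs_deriv_smul MeasurableSet.univ
    (fun x _ => (Real.hasDerivAt_exp x).hasDerivWithinAt) Real.exp_injective.injOn g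
  simpa [Real.range_exp, abs_of_pos (Real.exp_pos _)] using h

theorem integrableOn_Ioi_zero_iff_integrable_exp_smul {E : Type*} [NormedAddCommGroup E]
    [NormedSpace ℝ E] (g : ℝ → E) :
    IntegrableOn g (Ioi 0) ↔ Integrable fun x => Real.exp x • g (Real.exp x) := by
  have h := integrableOn_image_iff_integrableOn_abs_deriv_smul MeasurableSet.univ
    (fun x _ => (Real.hasDerivAt_exp x).hasDerivWithinAt) Real.exp_injective.injOn g
  simpa [Real.range_exp, abs_of_pos (Real.exp_pos _), IntegrableOn] using h

section MellinDerivative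

variable {c : ℝ} {U : Set ℝ}

theorem hasDerivAt_mellinD {g : ℝ → ℂ} {x : ℝ} (hg : DifferentiableAt ℝ g x)
    (hg' : DifferentiableAt ℝ (deriv g) x) :
    HasDerivAt (mellinD c g) (mellinD (c + 1) (deriv g) x) x := by
  have hid : HasDerivAt (fun y : ℝ => (y : ℂ)) 1 x := (hasDerivAt_id x).ofReal_comp
  refine ((hid.mul hg'.hasDerivAt).add (hg.hasDerivAt.const_mul (c : ℂ))).congr_deriv ?_
  simp only [mellinD]
  push_cast
  ring

theorem contDiffOn_mellinD {g : ℝ → ℂ} {k : ℕ} (hU : IsOpen U)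
    (hg : ContDiffOn ℝ (k + 1 : ℕ) g U) : ContDiffOn ℝ k (mellinD c g) U :=
  ((Complex.ofRealCLM.contDiff.contDiffOn).mul (hg.deriv_of_isOpen hU (by norm_cast))).add
    (contDiffOn_const.mul (hg.of_le (by norm_cast; omega)))

theorem contDiffOn_iterate_mellinD {f : ℝ → ℂ} {j k : ℕ} (hU : IsOpen U)
    (hf : ContDiffOn ℝ (j + k : ℕ) f U) : ContDiffOn ℝ k ((mellinD c)^[j] f) U := by
  induction j generalizing f with
  | zero => simpa using hf
  | succ j ih =>
    rw [Function.iterate_succ_apply]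
    exact ih (contDiffOn_mellinD hU (by rwa [Nat.add_right_comm]))

theorem iteratedDeriv_mellinD {g : ℝ → ℂ} {m : ℕ} (hU : IsOpen U)
    (hg : ContDiffOn ℝ (m + 1 : ℕ) g U) :
    EqOn (iteratedDeriv m (mellinD c g)) (mellinD (c + m) (iteratedDeriv m g)) U := by
  induction m with
  | zero => simp [EqOn]
  | succ m ih =>
    intro x hx
    have hd : ∀ i < m + 2, DifferentiableAt ℝ (iteratedDeriv i g) x :=
      fun i hi => hg.differentiableAt_iteratedDeriv hU hi hx
    rw [iteratedDeriv_succ, ((ih (hg.of_le (by norm_cast; omega))).eventuallyEq_of_mem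
      (hU.mem_nhds hx)).deriv_eq, (hasDerivAt_mellinD (hd m (by omega))
      (by simpa only [← iteratedDeriv_succ] using hd (m + 1) (by omega))).deriv,
      ← iteratedDeriv_succ]
    push_cast
    ring_nf

theorem differentiableAt_iterate_mellinD {f : ℝ → ℂ} {n : ℕ} {u : ℝ} (hU : IsOpen U)
    (hf : ContDiffOn ℝ n f U) (hu : u ∈ U) (hd : DifferentiableAt ℝ (iteratedDeriv n f) u) :
    DifferentiableAt ℝ ((mellinD c)^[n] f) u := by
  induction n generalizing f with
  | zero => simpa using hd
  | succ n ih =>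
    rw [Function.iterate_succ_apply]
    refine ih (contDiffOn_mellinD hU hf) (DifferentiableAt.congr_of_eventuallyEq ?_
      ((iteratedDeriv_mellinD hU hf).eventuallyEq_of_mem (hU.mem_nhds hu)))
    rw [iteratedDeriv_succ] at hd
    exact (Complex.ofRealCLM.differentiableAt.mul hd).add
      ((hf.differentiableAt_iteratedDeriv hU (by omega) hu).const_mul _)

end MellinDerivative

def expWeighted (c : ℝ) (g : ℝ → ℂ) : ℝ → ℂ :=
  fun y => (Real.exp (c * y) : ℂ) * g (Real.exp y)

section ExpWeighted

variable {c : ℝ} {g : ℝ → ℂ}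

theorem hasDerivAt_expWeighted {x : ℝ} (hg : DifferentiableAt ℝ g (Real.exp x)) :
    HasDerivAt (expWeighted c g) (expWeighted c (mellinD c g) x) x := by
  have hexp : HasDerivAt (fun y : ℝ => (Real.exp (c * y) : ℂ)) (Real.exp (c * x) * c : ℝ) x :=
    (((hasDerivAt_id x).const_mul c).exp.congr_deriv (by simp [mul_comm])).ofReal_comp
  refine (hexp.mul (hg.hasDerivAt.scomp x (Real.hasDerivAt_exp x))).congr_deriv ?_
  simp only [expWeighted, mellinD, Complex.real_smul, Function.comp_apply]
  push_cast
  ring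

theorem iteratedDeriv_expWeighted {f : ℝ → ℂ} {n j : ℕ} (hf : ContDiffOn ℝ n f (Ioi 0))
    (hj : j ≤ n) : iteratedDeriv j (expWeighted c f) = expWeighted c ((mellinD c)^[j] f) := by
  induction j with
  | zero => rw [iteratedDeriv_zero]; rfl
  | succ j ih =>
    ext x
    have hdiff : DifferentiableOn ℝ ((mellinD c)^[j] f) (Ioi 0) :=
      (contDiffOn_iterate_mellinD (k := 1) isOpen_Ioi
        (hf.of_le (by norm_cast))).differentiableOn one_ne_zero
    have hx := (hdiff _ (Real.exp_pos x)).differentiableAt (Ioi_mem_nhds (Real.exp_pos x))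
    rw [iteratedDeriv_succ, ih (by omega), (hasDerivAt_expWeighted hx).deriv,
      Function.iterate_succ_apply']

theorem norm_mul_rpow_sub_half_sq {u : ℝ} (hu : 0 < u) :
    ‖g u * ((u ^ (c - 1 / 2) : ℝ) : ℂ)‖ ^ 2 = ‖g u‖ ^ 2 * u ^ (2 * c - 1) := by
  rw [norm_mul, Complex.norm_real, Real.norm_of_nonneg (by positivity), mul_pow,
    ← Real.rpow_mul_natCast hu.le]
  congr 2
  ring

theorem norm_sq_expWeighted (x : ℝ) :
    ‖expWeighted c g x‖ ^ 2 =
      Real.exp x * (‖g (Real.exp x)‖ ^ 2 * Real.exp x ^ (2 * c - 1)) := by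
  have hexp : Real.exp (c * x) ^ 2 = Real.exp x * Real.exp x ^ (2 * c - 1) := by
    rw [← Real.exp_mul, ← Real.exp_add, ← Real.exp_nat_mul]
    congr 1
    push_cast
    ring
  rw [expWeighted, norm_mul, Complex.norm_real, Real.norm_of_nonneg (Real.exp_pos _).le,
    mul_pow, hexp]
  ring

theorem Xnorm_eq_sqrt_integral_norm_sq_expWeighted :
    Xnorm c g = √(∫ x, ‖expWeighted c g x‖ ^ 2) := by
  simp_rw [Xnorm, norm_sq_expWeighted, integral_Ioi_zero_eq_integral_exp_smul, smul_eq_mul]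

theorem memLp_expWeighted (hg : MemXc2 c g) : MemLp (expWeighted c g) 2 volume := by
  have hweight : expWeighted c g = fun x =>
      (Real.exp (x / 2) : ℂ) * (g (Real.exp x) * ((Real.exp x ^ (c - 1 / 2) : ℝ) : ℂ)) := by
    ext x
    rw [expWeighted, ← Real.exp_mul, mul_left_comm, ← Complex.ofReal_mul, ← Real.exp_add]
    ring_nf
  have hmeas : AEStronglyMeasurable (expWeighted c g) volume := by
    rw [hweight]
    have hcont : Continuous fun x : ℝ => (Real.exp (x / 2) : ℂ) := by fun_prop
    exact hcont.aestronglyMeasurable.mul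
      (hg.aestronglyMeasurable.comp_quasiMeasurePreserving quasiMeasurePreserving_exp)
  rw [memLp_two_iff_integrable_sq_norm hmeas]
  have hint : IntegrableOn (fun u => ‖g u‖ ^ 2 * u ^ (2 * c - 1)) (Ioi 0) :=
    IntegrableOn.congr_fun ((memLp_two_iff_integrable_sq_norm hg.aestronglyMeasurable).mp hg)
      (fun u hu => norm_mul_rpow_sub_half_sq hu) measurableSet_Ioi
  simpa only [norm_sq_expWeighted, smul_eq_mul] using
    (integrableOn_Ioi_zero_iff_integrable_exp_smul _).mp hint

end ExpWeighted

theorem mellin_sobolev_norm_identity_general (c : ℝ) (r : ℕ) (f : ℝ → ℂ)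
    (hsm : ContDiffOn ℝ ((r - 1 : ℕ) : ℕ∞) f (Set.Ioi 0))
    (hAC : ∃ m : ℝ → ℂ, LocallyIntegrableOn m (Set.Ioi 0) volume ∧
      ∀ x ∈ Set.Ioi (0:ℝ),
        iteratedDeriv (r - 1) f x = iteratedDeriv (r - 1) f 1 + ∫ u in (1:ℝ)..x, m u)
    (hΘ : MemXc2 c ((mellinD c)^[r] f)) :
    (∀ᵐ x : ℝ, DifferentiableAt ℝ
        (iteratedDeriv (r - 1) (fun y : ℝ => (Real.exp (c * y) : ℂ) * f (Real.exp y))) x) ∧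
    MemLp (iteratedDeriv r (fun y : ℝ => (Real.exp (c * y) : ℂ) * f (Real.exp y))) 2 volume ∧
    Real.sqrt (∫ x : ℝ,
        ‖iteratedDeriv r (fun y : ℝ => (Real.exp (c * y) : ℂ) * f (Real.exp y)) x‖ ^ 2)
      = Xnorm c ((mellinD c)^[r] f) := by
  rw [show (fun y : ℝ => (Real.exp (c * y) : ℂ) * f (Real.exp y)) = expWeighted c f from rfl]
  obtain ⟨m, hm, hprim⟩ := hAC
  have hexp : ∀ᵐ x : ℝ, DifferentiableAt ℝ ((mellinD c)^[r - 1] f) (Real.exp x) := by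
    refine quasiMeasurePreserving_exp.ae ?_
    filter_upwards [LocallyIntegrableOn.ae_hasDerivAt_of_eq_add_integral hm one_pos hprim,
      ae_restrict_mem measurableSet_Ioi] with u hu hu0
    exact differentiableAt_iterate_mellinD isOpen_Ioi hsm hu0 hu.differentiableAt
  have hlow : iteratedDeriv (r - 1) (expWeighted c f) = expWeighted c ((mellinD c)^[r - 1] f) :=
    iteratedDeriv_expWeighted hsm le_rfl
  have htop : iteratedDeriv r (expWeighted c f) =ᵐ[volume] expWeighted c ((mellinD c)^[r] f) := by
    rcases r with _ | n
    · simp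
    · filter_upwards [hexp] with x hx
      rw [Nat.add_sub_cancel] at hlow hx
      rw [iteratedDeriv_succ, hlow, (hasDerivAt_expWeighted hx).deriv,
        Function.iterate_succ_apply']
  refine ⟨?_, (memLp_expWeighted hΘ).ae_eq htop.symm, ?_⟩
  · filter_upwards [hexp] with x hx
    exact hlow ▸ (hasDerivAt_expWeighted hx).differentiableAt
  · rw [Xnorm_eq_sqrt_integral_norm_sq_expWeighted]
    exact congrArg Real.sqrt (integral_congr_ae (htop.fun_comp (‖·‖ ^ 2)))

/-- For `f ∈ W^{2,r}_c` (taken as its smooth, locally absolutely continuous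
representative), the function `h(x) = e^{cx} f(e^x)` is `r` times differentiable
a.e., `h^{(r)} ∈ L²(ℝ)`, and `‖h^{(r)}‖_{L²(ℝ)} = ‖Θ_c^r f‖_{X²_c}`. -/
theorem mellin_sobolev_norm_identity (c : ℝ) (r : ℕ) (hr : 1 ≤ r) (f : ℝ → ℂ)
    (hf : MemXc2 c f)
    (hsm : ContDiffOn ℝ ((r - 1 : ℕ) : ℕ∞) f (Set.Ioi 0))
    (hAC : ∃ m : ℝ → ℂ, LocallyIntegrableOn m (Set.Ioi 0) volume ∧
      ∀ x ∈ Set.Ioi (0:ℝ),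
        iteratedDeriv (r - 1) f x = iteratedDeriv (r - 1) f 1 + ∫ u in (1:ℝ)..x, m u)
    (hΘ : MemXc2 c ((mellinD c)^[r] f)) :
    (∀ᵐ x : ℝ, DifferentiableAt ℝ
        (iteratedDeriv (r - 1) (fun y : ℝ => (Real.exp (c * y) : ℂ) * f (Real.exp y))) x) ∧
    MemLp (iteratedDeriv r (fun y : ℝ => (Real.exp (c * y) : ℂ) * f (Real.exp y))) 2 volume ∧
    Real.sqrt (∫ x : ℝ,
        ‖iteratedDeriv r (fun y : ℝ => (Real.exp (c * y) : ℂ) * f (Real.exp y)) x‖ ^ 2)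
      = Xnorm c ((mellinD c)^[r] f) :=
  mellin_sobolev_norm_identity_general c r f hsm hAC hΘ
end
end

section
/- Let c ∈ ℝ, T > 0, and let f : (0,∞) → ℂ be a function with u ↦ f(u)u^{c-1/2} ∈ L²(0,∞) such that the function h(x) = e^{cx} f(e^x), x ∈ ℝ, extends to an entire function of exponential type T (i.e. |h(z)| ≤ C e^{T|Im z|} for all z ∈ ℂ for some C > 0). Then M²[f](c+it) = 0 for almost every t with |t| > T; that is, f is Mellin bandlimited to [-T,T]. -/
open MeasureTheory Filter Complex Set

noncomputable section

open scoped ContDiff ENNReal Topology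

/-!
Substituting `u = eˣ` turns the truncated Mellin integrals of `f` over `(e⁻ᴿ, eᴿ]` into the
truncated Fourier integrals `∫_{-R}^{R} e^{itx} H(x) dx`, so `G` is their `L²` limit. To see
that `G` vanishes on `(T, ∞)`, pair it with a smooth test function `g` supported there: by Fubini
the pairing is `∫_{-R}^{R} ψ(x) H(x) dx`, where `ψ(z) = ∫ g(t) e^{itz} dt` is entire and
`O(e^{-T Im z} / ‖z‖²)` on the upper half-plane. So `ψ H = O(‖z‖⁻²)` there, and Cauchy's theorem on
the rectangle `[-R, R] × [0, R]` shows that the pairing tends to `0`. The half-line `(-∞, -T)` is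
the reflection `x ↦ -x` of this case.
-/

theorem norm_cexp_ofReal_mul_mul_I (t : ℝ) (z : ℂ) :
    ‖cexp (t * z * I)‖ = Real.exp (-(t * z.im)) := by
  rw [Complex.norm_exp]
  congr 1
  simp

def fourierLaplace (g : ℝ → ℝ) (z : ℂ) : ℂ :=
  ∫ t : ℝ, (g t : ℂ) * cexp (t * z * I)

theorem differentiable_fourierLaplace {g : ℝ → ℝ} (hg : Continuous g)
    (hgs : HasCompactSupport g) : Differentiable ℂ (fourierLaplace g) := by
  intro z₀
  have hcont : ∀ z : ℂ, Continuous fun t : ℝ => (g t : ℂ) * cexp (t * z * I) := fun z => by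
    fun_prop
  have hbound : ∀ᵐ t : ℝ, ∀ z ∈ Metric.ball z₀ 1,
      ‖(g t : ℂ) * (cexp (t * z * I) * (t * I))‖ ≤
        |g t| * (Real.exp (|t| * (|z₀.im| + 1)) * |t|) := by
    refine Eventually.of_forall fun t z hz => ?_
    have him : |z.im| ≤ |z₀.im| + 1 := by
      have := (abs_im_le_norm (z - z₀)).trans_lt (mem_ball_iff_norm.mp hz)
      rw [sub_im] at this
      linarith [abs_sub_abs_le_abs_sub z.im z₀.im]
    have hexp : Real.exp (-(t * z.im)) ≤ Real.exp (|t| * (|z₀.im| + 1)) := by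
      gcongr
      calc -(t * z.im) ≤ |t| * |z.im| := by rw [← abs_mul]; exact neg_le_abs _
        _ ≤ |t| * (|z₀.im| + 1) := by gcongr
    simp only [norm_mul, norm_cexp_ofReal_mul_mul_I, norm_real, Real.norm_eq_abs, norm_I, mul_one]
    gcongr
  have hderiv : ∀ᵐ t : ℝ, ∀ z ∈ Metric.ball z₀ 1,
      HasDerivAt (fun z : ℂ => (g t : ℂ) * cexp (t * z * I))
        ((g t : ℂ) * (cexp (t * z * I) * (t * I))) z := by
    refine Eventually.of_forall fun t z _ => ?_
    have hlin : HasDerivAt (fun z : ℂ => t * z * I) (t * I) z := by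
      simpa using ((hasDerivAt_id z).const_mul (t : ℂ)).mul_const I
    exact hlin.cexp.const_mul _
  have hgs_abs : HasCompactSupport fun t => |g t| := hgs.comp_left abs_zero
  exact (hasDerivAt_integral_of_dominated_loc_of_deriv_le (Metric.ball_mem_nhds z₀ one_pos)
    (Eventually.of_forall fun z => (hcont z).aestronglyMeasurable)
    ((hcont z₀).integrable_of_hasCompactSupport (hgs.comp_left ofReal_zero).mul_right)
    (by fun_prop : Continuous _).aestronglyMeasurable hbound
    ((by fun_prop : Continuous _).integrable_of_hasCompactSupport hgs_abs.mul_right)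
    hderiv).2.differentiableAt

theorem integral_mul_cexp_eq_neg_inv_mul_integral_deriv {h : ℝ → ℝ} (hh : ContDiff ℝ 1 h)
    (hhs : HasCompactSupport h) {w : ℂ} (hw : w ≠ 0) :
    ∫ t : ℝ, (h t : ℂ) * cexp (t * w) = -w⁻¹ * ∫ t : ℝ, ((deriv h t : ℝ) : ℂ) * cexp (t * w) := by
  have hu : ∀ t : ℝ, HasDerivAt (fun t : ℝ => (h t : ℂ)) ((deriv h t : ℝ) : ℂ) t := fun t =>
    ((hh.differentiable one_ne_zero) t).hasDerivAt.ofReal_comp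
  have hv : ∀ t : ℝ, HasDerivAt (fun t : ℝ => w⁻¹ * cexp (t * w)) (cexp (t * w)) t := by
    intro t
    refine (((hasDerivAt_id t).ofReal_comp.mul_const w).cexp.const_mul w⁻¹).congr_deriv ?_
    simp only [id, ofReal_one, one_mul]
    field_simp
  have hc := hh.continuous
  have hc' := hh.continuous_deriv le_rfl
  have hs := hhs.comp_left ofReal_zero
  have hs' := hhs.deriv.comp_left ofReal_zero
  rw [integral_mul_deriv_eq_deriv_mul_of_integrable (fun t _ => hu t) (fun t _ => hv t)
      ((by fun_prop : Continuous _).integrable_of_hasCompactSupport hs.mul_right)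
      ((by fun_prop : Continuous _).integrable_of_hasCompactSupport hs'.mul_right)
      ((by fun_prop : Continuous _).integrable_of_hasCompactSupport hs.mul_right),
    ← integral_const_mul, ← integral_neg]
  congr 1 with t
  ring

theorem norm_integral_mul_cexp_le {k : ℝ → ℝ} (hk : Integrable k) {a : ℝ}
    (hka : Function.support k ⊆ Ici a) {z : ℂ} (hz : 0 ≤ z.im) :
    ‖∫ t : ℝ, (k t : ℂ) * cexp (t * z * I)‖ ≤ (∫ t : ℝ, |k t|) * Real.exp (-(a * z.im)) := by
  rw [← integral_mul_const]
  refine norm_integral_le_of_norm_le (hk.abs.mul_const _) (Eventually.of_forall fun t => ?_)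
  rw [norm_mul, norm_real, Real.norm_eq_abs, norm_cexp_ofReal_mul_mul_I]
  by_cases ht : k t = 0
  · simp [ht]
  · have hat : a ≤ t := hka ht
    gcongr

/-- Two integrations by parts trade the smoothness of `g` for decay `‖z‖⁻²`. -/
theorem norm_fourierLaplace_le {g : ℝ → ℝ} (hg : ContDiff ℝ 2 g) (hgs : HasCompactSupport g)
    {a : ℝ} (hga : tsupport g ⊆ Ici a) {z : ℂ} (hz₀ : z ≠ 0) (hz : 0 ≤ z.im) :
    ‖fourierLaplace g z‖ ≤ (∫ t : ℝ, |deriv (deriv g) t|) * Real.exp (-(a * z.im)) / ‖z‖ ^ 2 := by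
  have hw : z * I ≠ 0 := mul_ne_zero hz₀ I_ne_zero
  have hg' : ContDiff ℝ 1 (deriv g) := ((contDiff_succ_iff_deriv (n := 1)).mp hg).2.2
  have hg'' : Continuous (deriv (deriv g)) := hg'.continuous_deriv le_rfl
  have hsupp : Function.support (deriv (deriv g)) ⊆ Ici a :=
    support_deriv_subset.trans (tsupport_deriv_subset.trans hga)
  have hbound := norm_integral_mul_cexp_le
    (hg''.integrable_of_hasCompactSupport hgs.deriv.deriv) hsupp hz
  simp only [fourierLaplace, mul_assoc] at hbound ⊢
  rw [integral_mul_cexp_eq_neg_inv_mul_integral_deriv (hg.of_le one_le_two) hgs hw,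
    integral_mul_cexp_eq_neg_inv_mul_integral_deriv hg' hgs.deriv hw]
  simp only [norm_mul, norm_neg, norm_inv, norm_I, mul_one]
  rw [← mul_assoc, ← mul_inv, ← sq, ← div_eq_inv_mul]
  gcongr

/-- Cauchy's theorem on the rectangle `[-R, R] × [0, R]`: on its three other sides `‖z‖ ≥ R`,
so they contribute `O(1/R)`. -/
theorem tendsto_intervalIntegral_of_norm_le_div_sq {Φ : ℂ → ℂ}
    (hΦ : DifferentiableOn ℂ Φ {z | 0 ≤ z.im}) {K : ℝ}
    (hK : ∀ z : ℂ, z ≠ 0 → 0 ≤ z.im → ‖Φ z‖ ≤ K / ‖z‖ ^ 2) :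
    Tendsto (fun R : ℝ => ∫ x in -R..R, Φ x) atTop (𝓝 0) := by
  have hK₀ : 0 ≤ K := by simpa using (norm_nonneg _).trans (hK I I_ne_zero (by simp))
  have hbound : ∀ R : ℝ, 0 < R → ‖∫ x in -R..R, Φ x‖ ≤ 4 * K / R := by
    intro R hR
    have hedge : ∀ z : ℂ, 0 ≤ z.im → R ≤ ‖z‖ → ‖Φ z‖ ≤ K / R ^ 2 := fun z hz hzR =>
      (hK z (norm_pos_iff.mp (hR.trans_le hzR)) hz).trans (by gcongr)
    have htop : ∀ x ∈ uIoc (-R) R, ‖Φ (x + R * I)‖ ≤ K / R ^ 2 := fun x _ =>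
      hedge _ (by simpa using hR.le) (by simpa [abs_of_pos hR] using abs_im_le_norm (x + R * I))
    have hside : ∀ s : ℝ, |s| = R → ∀ y ∈ uIoc 0 R, ‖Φ (s + y * I)‖ ≤ K / R ^ 2 :=
      fun s hs y hy => hedge _ (by simpa using (uIoc_of_le hR.le ▸ hy).1.le)
        (by simpa [hs] using abs_re_le_norm (s + y * I))
    have hrect := integral_boundary_rect_eq_zero_of_differentiableOn Φ (-R : ℂ) (R + R * I)
      (hΦ.mono fun z hz => by
        have him := hz.2
        simp only [neg_im, ofReal_im, add_im, ofReal_re, mul_im, I_re, I_im, mul_zero, mul_one,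
          neg_zero, zero_add, add_zero, uIcc_of_le hR.le] at him
        exact him.1)
    simp only [neg_re, ofReal_re, add_re, mul_re, I_re, I_im, ofReal_im, neg_im, add_im, mul_im,
      mul_zero, mul_one, sub_zero, zero_add, add_zero, neg_zero, ofReal_neg, ofReal_zero,
      zero_mul] at hrect
    have hsplit : ∫ x in -R..R, Φ x = (∫ x in -R..R, Φ (x + R * I))
        - I • (∫ y in (0 : ℝ)..R, Φ (R + y * I)) + I • ∫ y in (0 : ℝ)..R, Φ (-R + y * I) := by
      linear_combination hrect
    have e₁ := (intervalIntegral.norm_integral_le_of_norm_le_const htop).trans_eq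
      (by rw [sub_neg_eq_add, abs_of_pos (by positivity)])
    have e₂ := (intervalIntegral.norm_integral_le_of_norm_le_const
      (hside R (abs_of_pos hR))).trans_eq (by rw [sub_zero, abs_of_pos hR])
    have e₃ := (intervalIntegral.norm_integral_le_of_norm_le_const
      (by simpa using hside (-R) (by simp [abs_of_pos hR]))).trans_eq
      (by rw [sub_zero, abs_of_pos hR])
    rw [hsplit]
    calc _ ≤ ‖∫ x in -R..R, Φ (x + R * I)‖ + ‖∫ y in (0 : ℝ)..R, Φ (R + y * I)‖
          + ‖∫ y in (0 : ℝ)..R, Φ (-R + y * I)‖ := by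
          refine (norm_add_le _ _).trans ?_
          simp only [norm_smul, norm_I, one_mul]
          gcongr
          exact (norm_sub_le _ _).trans_eq (by rw [norm_smul, norm_I, one_mul])
      _ ≤ K / R ^ 2 * (R + R) + K / R ^ 2 * R + K / R ^ 2 * R := add_le_add (add_le_add e₁ e₂) e₃
      _ = 4 * K / R := by field_simp; ring
  refine squeeze_zero_norm' ?_ ((tendsto_const_nhds.div_atTop tendsto_id : Tendsto
    (fun R : ℝ => 4 * K / R) atTop (𝓝 0)))
  filter_upwards [eventually_gt_atTop 0] with R hR using hbound R hR

theorem tendsto_intervalIntegral_fourierLaplace_mul {g : ℝ → ℝ} (hg : ContDiff ℝ 2 g)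
    (hgs : HasCompactSupport g) {T C : ℝ} (hgT : tsupport g ⊆ Ici T) {H : ℂ → ℂ}
    (hH : Differentiable ℂ H) (hHT : ∀ z : ℂ, ‖H z‖ ≤ C * Real.exp (T * |z.im|)) :
    Tendsto (fun R : ℝ => ∫ x in -R..R, fourierLaplace g x * H x) atTop (𝓝 0) := by
  set B := ∫ t : ℝ, |deriv (deriv g) t|
  have hB : 0 ≤ B := integral_nonneg fun t => abs_nonneg _
  refine tendsto_intervalIntegral_of_norm_le_div_sq (K := B * C)
    ((differentiable_fourierLaplace hg.continuous hgs).mul hH).differentiableOn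
    fun z hz₀ hz => ?_
  have hexp : Real.exp (-(T * z.im)) * Real.exp (T * |z.im|) = 1 := by
    rw [abs_of_nonneg hz, ← Real.exp_add, neg_add_cancel, Real.exp_zero]
  calc ‖fourierLaplace g z * H z‖
      ≤ B * Real.exp (-(T * z.im)) / ‖z‖ ^ 2 * (C * Real.exp (T * |z.im|)) := by
        rw [norm_mul]
        exact mul_le_mul (norm_fourierLaplace_le hg hgs hgT hz₀ hz) (hHT z) (norm_nonneg _)
          (by positivity)
    _ = B * C / ‖z‖ ^ 2 := by
        linear_combination (B * C / ‖z‖ ^ 2) * hexp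

def partialFourier (h : ℝ → ℂ) (R t : ℝ) : ℂ :=
  ∫ x in -R..R, cexp (t * x * I) * h x

theorem continuous_partialFourier {h : ℝ → ℂ} (hh : Continuous h) (R : ℝ) :
    Continuous (partialFourier h R) :=
  intervalIntegral.continuous_parametric_intervalIntegral_of_continuous' (by fun_prop) _ _

theorem partialFourier_comp_neg (h : ℝ → ℂ) (R t : ℝ) :
    partialFourier (fun x => h (-x)) R t = partialFourier h R (-t) := by
  have := intervalIntegral.integral_comp_neg (a := -R) (b := R)
    fun x : ℝ => cexp (-(t * x * I)) * h x
  simp only [neg_neg, ofReal_neg, neg_mul, mul_neg] at this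
  simpa only [partialFourier, ofReal_neg, neg_mul] using this

theorem integral_smul_partialFourier {h : ℝ → ℂ} (hh : Continuous h) {g : ℝ → ℝ}
    (hg : Integrable g) {R : ℝ} (hR : 0 ≤ R) :
    ∫ t : ℝ, g t • partialFourier h R t = ∫ x in -R..R, fourierLaplace g x * h x := by
  have hint : Integrable (fun p : ℝ × ℝ => g p.1 • (cexp (p.1 * p.2 * I) * h p.2))
      (volume.prod (volume.restrict (Ioc (-R) R))) := by
    refine Integrable.mono' (hg.norm.mul_prod (hh.norm.integrableOn_Ioc (a := -R) (b := R)))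
      ((hg.aestronglyMeasurable.comp_fst).smul (by fun_prop : Continuous _).aestronglyMeasurable)
      (Eventually.of_forall fun p => ?_)
    simp [norm_cexp_ofReal_mul_mul_I]
  simp only [partialFourier, fourierLaplace, intervalIntegral.integral_of_le (neg_le_self hR),
    ← integral_smul]
  rw [integral_integral_swap hint]
  congr 1 with x
  simp only [real_smul, ← mul_assoc, integral_mul_const]

theorem tendsto_integral_smul_of_tendsto_eLpNorm_sub {α ι : Type*} [MeasurableSpace α]
    {μ : Measure α} {l : Filter ι} {F : ι → α → ℂ} {G : α → ℂ} {g : α → ℝ} (hg : MemLp g 2 μ)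
    (hF : ∀ i, AEStronglyMeasurable (F i) μ) (hG : AEStronglyMeasurable G μ)
    (hgF : ∀ᶠ i in l, Integrable (fun x => g x • F i x) μ)
    (hFG : Tendsto (fun i => eLpNorm (fun x => F i x - G x) 2 μ) l (𝓝 0)) :
    Tendsto (fun i => ∫ x, g x • F i x ∂μ) l (𝓝 (∫ x, g x • G x ∂μ)) := by
  refine tendsto_integral_of_L1' _ (hg.1.smul hG) hgF ?_
  have hle : ∀ i, eLpNorm ((fun x => g x • F i x) - fun x => g x • G x) 1 μ ≤
      eLpNorm g 2 μ * eLpNorm (fun x => F i x - G x) 2 μ := fun i => by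
    refine le_of_eq_of_le ?_ (eLpNorm_smul_le_mul_eLpNorm (p := 2) (q := 2) (r := 1)
      (f := fun x => F i x - G x) ((hF i).sub hG) hg.1)
    congr 1 with x
    simp [smul_sub]
  have hlim := ENNReal.Tendsto.const_mul hFG (Or.inr hg.2.ne)
  rw [mul_zero] at hlim
  exact tendsto_of_tendsto_of_tendsto_of_le_of_le tendsto_const_nhds hlim (fun _ => zero_le) hle

theorem setIntegral_mellin_Ioc_exp_eq_partialFourier (c : ℝ) (f : ℝ → ℂ) {R : ℝ} (hR : 0 ≤ R)
    (t : ℝ) :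
    ∫ u in Ioc (Real.exp R)⁻¹ (Real.exp R), (u : ℂ) ^ ((c : ℂ) + t * I - 1) * f u
      = partialFourier (fun x => (Real.exp (c * x) : ℂ) * f (Real.exp x)) R t := by
  rw [← Real.exp_neg, ← Real.image_exp_Ioc, integral_image_eq_integral_abs_deriv_smul
      measurableSet_Ioc (fun x _ => (Real.hasDerivAt_exp x).hasDerivWithinAt)
      Real.exp_injective.injOn,
    partialFourier, intervalIntegral.integral_of_le (neg_le_self hR)]
  refine setIntegral_congr_fun measurableSet_Ioc fun x _ => ?_
  have hx := Real.exp_pos x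
  rw [abs_of_pos hx, real_smul, cpow_def_of_ne_zero (ofReal_ne_zero.mpr hx.ne'),
    ← ofReal_log hx.le, Real.log_exp, ofReal_exp, ofReal_exp, ← mul_assoc, ← mul_assoc,
    ← Complex.exp_add, ← Complex.exp_add]
  congr 2
  push_cast
  ring

theorem MellinTransL2.tendsto_eLpNorm_partialFourier_sub {c : ℝ} {f G : ℝ → ℂ}
    (hG : MellinTransL2 c f G) :
    Tendsto (fun R => eLpNorm (fun t =>
        partialFourier (fun x => (Real.exp (c * x) : ℂ) * f (Real.exp x)) R t - G t) 2 volume)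
      atTop (𝓝 0) := by
  refine (hG.comp Real.tendsto_exp_atTop).congr' ?_
  filter_upwards [eventually_ge_atTop 0] with R hR
  simp only [Function.comp_apply, setIntegral_mellin_Ioc_exp_eq_partialFourier c f hR]

section PaleyWiener

variable {T C : ℝ} {H : ℂ → ℂ} {G : ℝ → ℂ}

theorem ae_eq_zero_on_Ioi_of_tendsto_eLpNorm_partialFourier_sub (hH : Differentiable ℂ H)
    (hHT : ∀ z : ℂ, ‖H z‖ ≤ C * Real.exp (T * |z.im|)) (hG : AEStronglyMeasurable G)
    (hFG : Tendsto (fun R => eLpNorm (fun t => partialFourier (fun x : ℝ => H x) R t - G t) 2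
      volume) atTop (𝓝 0)) :
    ∀ᵐ t : ℝ, T < t → G t = 0 := by
  have hHc : Continuous fun x : ℝ => H x := hH.continuous.comp continuous_ofReal
  have hF := continuous_partialFourier hHc
  obtain ⟨R₀, hR₀⟩ := (hFG.eventually_lt_const zero_lt_one).exists
  have hGloc : LocallyIntegrable G := by
    have hdiff : MemLp (fun t => partialFourier (fun x : ℝ => H x) R₀ t - G t) 2 :=
      ⟨(hF R₀).aestronglyMeasurable.sub hG, hR₀.trans ENNReal.one_lt_top⟩
    convert (hF R₀).locallyIntegrable.sub (hdiff.locallyIntegrable one_le_two) using 1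
    ext t
    simp
  refine isOpen_Ioi.ae_eq_zero_of_integral_contDiff_smul_eq_zero (hGloc.locallyIntegrableOn _)
    fun g hg hgs hgT => ?_
  have hpair := tendsto_integral_smul_of_tendsto_eLpNorm_sub
    (hg.continuous.memLp_of_hasCompactSupport hgs) (fun R => (hF R).aestronglyMeasurable) hG
    (Eventually.of_forall fun R =>
      (hg.continuous.smul (hF R)).integrable_of_hasCompactSupport hgs.smul_right) hFG
  refine tendsto_nhds_unique hpair ((tendsto_intervalIntegral_fourierLaplace_mul
    (hg.of_le (by norm_cast)) hgs (hgT.trans Ioi_subset_Ici_self) hH hHT).congr' ?_)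
  filter_upwards [eventually_ge_atTop 0] with R hR
  exact (integral_smul_partialFourier hHc
    (hg.continuous.integrable_of_hasCompactSupport hgs) hR).symm

theorem ae_eq_zero_of_lt_abs_of_tendsto_eLpNorm_partialFourier_sub (hH : Differentiable ℂ H)
    (hHT : ∀ z : ℂ, ‖H z‖ ≤ C * Real.exp (T * |z.im|)) (hG : AEStronglyMeasurable G)
    (hFG : Tendsto (fun R => eLpNorm (fun t => partialFourier (fun x : ℝ => H x) R t - G t) 2
      volume) atTop (𝓝 0)) :
    ∀ᵐ t : ℝ, T < |t| → G t = 0 := by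
  have hneg := Measure.measurePreserving_neg (volume : Measure ℝ)
  have hFG' : Tendsto (fun R => eLpNorm (fun t =>
      partialFourier (fun x : ℝ => H (-x)) R t - G (-t)) 2 volume) atTop (𝓝 0) := by
    refine hFG.congr fun R => ?_
    rw [← eLpNorm_comp_measurePreserving (g := fun t => partialFourier (fun x : ℝ => H x) R t - G t)
      ((continuous_partialFourier (hH.continuous.comp continuous_ofReal) R).aestronglyMeasurable.sub
        hG) hneg]
    congr 1 with t
    simp [← partialFourier_comp_neg]
  have hpos := ae_eq_zero_on_Ioi_of_tendsto_eLpNorm_partialFourier_sub hH hHT hG hFG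
  have hreflected := hneg.quasiMeasurePreserving.ae
    (ae_eq_zero_on_Ioi_of_tendsto_eLpNorm_partialFourier_sub (hH.comp differentiable_neg)
      (fun z => by simpa using hHT (-z)) (hG.comp_measurePreserving hneg) hFG')
  filter_upwards [hpos, hreflected] with t hpos_t hneg_t ht
  rcases lt_abs.mp ht with h | h
  · exact hpos_t h
  · simpa using hneg_t h

end PaleyWiener

theorem mellin_paley_wiener_general (c T : ℝ) (f : ℝ → ℂ)
    (H : ℂ → ℂ) (hH : Differentiable ℂ H)
    (hHf : ∀ x : ℝ, H (x : ℂ) = (Real.exp (c * x) : ℂ) * f (Real.exp x))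
    (htype : ∃ C > 0, ∀ z : ℂ, ‖H z‖ ≤ C * Real.exp (T * |z.im|)) :
    ∀ G : ℝ → ℂ, Measurable G → MellinTransL2 c f G →
      ∀ᵐ t : ℝ, T < |t| → G t = 0 := by
  intro G hGm hG
  obtain ⟨C, -, hHT⟩ := htype
  have hFG := hG.tendsto_eLpNorm_partialFourier_sub
  simp only [← hHf] at hFG
  exact ae_eq_zero_of_lt_abs_of_tendsto_eLpNorm_partialFourier_sub hH hHT
    hGm.aestronglyMeasurable hFG

/-- **Paley–Wiener theorem for the Mellin transform (`B̃²_{c,T} ⊆ B²_{c,T}`).**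
If `f ∈ X²_c` and `h(x) = e^{cx} f(e^x)` extends to an entire function of exponential
type `T`, then `M²[f](c+it) = 0` for a.e. `|t| > T`. -/
theorem mellin_paley_wiener (c T : ℝ) (hT : 0 < T) (f : ℝ → ℂ) (hf : MemXc2 c f)
    (H : ℂ → ℂ) (hH : Differentiable ℂ H)
    (hHf : ∀ x : ℝ, H (x : ℂ) = (Real.exp (c * x) : ℂ) * f (Real.exp x))
    (htype : ∃ C > 0, ∀ z : ℂ, ‖H z‖ ≤ C * Real.exp (T * |z.im|)) :
    ∀ G : ℝ → ℂ, Measurable G → MellinTransL2 c f G →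
      ∀ᵐ t : ℝ, T < |t| → G t = 0 :=
  mellin_paley_wiener_general c T f H hH hHf htype
end
end
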